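/- arXiv:1701.01314 — 4 statements merged into one kernel-verified Lean document; each statement's English description precedes it below -/
import Mathlib

section
/- Let k be a field and A a k-biring. Then every finite subset of A is contained in a k-subalgebra W of A that is finitely generated as a k-algebra and satisfies S(W) ⊆ W, Δ⁺(W) ⊆ W′ and Δ×(W) ⊆ W′, where W′ denotes the image of W ⊗[k] W in A ⊗[k] A (the k-subalgebra of A ⊗[k] A generated by the elements w ⊗ 1 and 1 ⊗ w with w ∈ W). Consequently every affine ring scheme over a field is a filtered inverse limit of ring schemes of finite type. (Theorem 2.8 of the paper.) -/
/- A `k`-biring: a commutative `k`-algebra `A` with coaddition, additive counit, antipode,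
comultiplication and multiplicative counit, such that for every commutative `k`-algebra `R`
the induced operations make `Hom_{k-alg}(A, R)` a commutative unital ring (equivalently, the
diagrammatic coring/codistributivity axioms hold). -/

open scoped TensorProduct

/-- The binary operation on `k`-algebra homomorphisms `A →ₐ[k] R` induced by a
comultiplication-type map `Δ : A →ₐ[k] A ⊗[k] A`: `(f, g) ↦ mult ∘ (f ⊗ g) ∘ Δ`. -/
noncomputable def ptOp (k A : Type) [Field k] [CommRing A] [Algebra k A]
    (Δ : A →ₐ[k] A ⊗[k] A) {R : Type} [CommRing R] [Algebra k R]
    (f g : A →ₐ[k] R) : A →ₐ[k] R :=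
  (Algebra.TensorProduct.lmul' k (S := R)).comp ((Algebra.TensorProduct.map f g).comp Δ)

/-- The constant point induced by a counit-type map `ε : A →ₐ[k] k`. -/
noncomputable def ptConst (k A : Type) [Field k] [CommRing A] [Algebra k A]
    (ε : A →ₐ[k] k) {R : Type} [CommRing R] [Algebra k R] : A →ₐ[k] R :=
  (Algebra.ofId k R).comp ε

/-- A `k`-biring structure on the commutative `k`-algebra `A`; equivalently, the structure of
an affine ring scheme on `Spec A` over `k`. -/
structure Biring (k A : Type) [Field k] [CommRing A] [Algebra k A] where
  coadd : A →ₐ[k] A ⊗[k] A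
  counitAdd : A →ₐ[k] k
  antipode : A →ₐ[k] A
  comul : A →ₐ[k] A ⊗[k] A
  counitMul : A →ₐ[k] k
  pt_add_assoc : ∀ (R : Type) [CommRing R] [Algebra k R] (f g h : A →ₐ[k] R),
    ptOp k A coadd (ptOp k A coadd f g) h = ptOp k A coadd f (ptOp k A coadd g h)
  pt_add_comm : ∀ (R : Type) [CommRing R] [Algebra k R] (f g : A →ₐ[k] R),
    ptOp k A coadd f g = ptOp k A coadd g f
  pt_zero_add : ∀ (R : Type) [CommRing R] [Algebra k R] (f : A →ₐ[k] R),
    ptOp k A coadd (ptConst k A counitAdd) f = f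
  pt_add_neg : ∀ (R : Type) [CommRing R] [Algebra k R] (f : A →ₐ[k] R),
    ptOp k A coadd f (f.comp antipode) = ptConst k A counitAdd
  pt_mul_assoc : ∀ (R : Type) [CommRing R] [Algebra k R] (f g h : A →ₐ[k] R),
    ptOp k A comul (ptOp k A comul f g) h = ptOp k A comul f (ptOp k A comul g h)
  pt_mul_comm : ∀ (R : Type) [CommRing R] [Algebra k R] (f g : A →ₐ[k] R),
    ptOp k A comul f g = ptOp k A comul g f
  pt_one_mul : ∀ (R : Type) [CommRing R] [Algebra k R] (f : A →ₐ[k] R),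
    ptOp k A comul (ptConst k A counitMul) f = f
  pt_mul_add : ∀ (R : Type) [CommRing R] [Algebra k R] (f g h : A →ₐ[k] R),
    ptOp k A comul f (ptOp k A coadd g h)
      = ptOp k A coadd (ptOp k A comul f g) (ptOp k A comul f h)

/-- The image of `W ⊗[k] W` in `A ⊗[k] A`: the `k`-subalgebra of `A ⊗[k] A` generated by the
elements `w ⊗ 1` and `1 ⊗ w` with `w ∈ W`. -/
noncomputable def tensorSq (k A : Type) [Field k] [CommRing A] [Algebra k A] (W : Subalgebra k A) :
    Subalgebra k (A ⊗[k] A) :=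
  Algebra.adjoin k
    {x : A ⊗[k] A | ∃ w ∈ W, x = w ⊗ₜ[k] (1 : A) ∨ x = (1 : A) ⊗ₜ[k] w}

/-!
For every commutative `k`-algebra `R`, the points `Hom(A, R)` form a commutative ring, naturally in
`R`. Hence the affine monoid `r ↦ a * r + b`, with coordinate ring `A ⊗ A`, acts on `Spec A`:
dually, `ρ f (r, (a, b)) = f (a * r + b)` makes `A` a comodule over `A ⊗ A`. Over a field a comodule
is locally finite: the span `V` of `s` and of the coefficients of `ρ(s)` in a basis of `A ⊗ A` is
finite-dimensional and `ρ(V) ⊆ V ⊗ (A ⊗ A)`. The antipode, coaddition and comultiplication are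
specialisations of `ρ` at `(a, b) = (-1, 0)`, `(1, b)` and `(a, 0)`, so they map `V` into `V`,
`V ⊗ A` and `V ⊗ A`; by cocommutativity the last two images lie in `V ⊗ A ∩ A ⊗ V = V ⊗ V`, and
`W = k[V]` works.
-/

section Comodule

open TensorProduct LinearMap

variable {k M C N : Type*} [CommRing k] [AddCommGroup M] [Module k M] [AddCommGroup C]
  [Module k C] [AddCommGroup N] [Module k N]

def IsSubcomodule (ρ : M →ₗ[k] M ⊗[k] C) (V : Submodule k M) : Prop :=
  ∀ v ∈ V, ρ v ∈ range (V.subtype.rTensor C)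

theorem lTensor_mem_range_rTensor_subtype {V : Submodule k M} {t : M ⊗[k] C}
    (ht : t ∈ range (V.subtype.rTensor C)) (φ : C →ₗ[k] N) :
    φ.lTensor M t ∈ range (V.subtype.rTensor N) := by
  obtain ⟨u, rfl⟩ := ht
  exact ⟨φ.lTensor V u, by
    rw [← comp_apply, ← comp_apply, rTensor_comp_lTensor, lTensor_comp_rTensor]⟩

theorem rid_mem_of_mem_range_rTensor_subtype {V : Submodule k M} {t : M ⊗[k] k}
    (ht : t ∈ range (V.subtype.rTensor k)) : TensorProduct.rid k M t ∈ V := by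
  obtain ⟨u, rfl⟩ := ht
  induction u using TensorProduct.induction_on with
  | zero => simp
  | tmul v c => simpa using V.smul_mem c v.2
  | add u u' hu hu' => simpa using add_mem hu hu'

theorem mem_range_rTensor_subtype_of_forall_coeff_mem {ι : Type*} [DecidableEq ι]
    (b : Module.Basis ι k C) {V : Submodule k M} {t : M ⊗[k] C}
    (h : ∀ i, equivFinsuppOfBasisRight b t i ∈ V) : t ∈ range (V.subtype.rTensor C) := by
  rw [← (equivFinsuppOfBasisRight b).symm_apply_apply t, equivFinsuppOfBasisRight_symm_apply]
  exact Submodule.finsuppSum_mem _ _ _ _ fun i _ => ⟨⟨_, h i⟩ ⊗ₜ[k] b i, rfl⟩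

variable {ρ : M →ₗ[k] M ⊗[k] C} {Δ : C →ₗ[k] C ⊗[k] C}

theorem coaction_coeff_eq_lTensor {ι : Type*} [DecidableEq ι] (b : Module.Basis ι k C)
    (hρ : (TensorProduct.assoc k M C C).toLinearMap ∘ₗ ρ.rTensor C ∘ₗ ρ = Δ.lTensor M ∘ₗ ρ)
    (x : M) (i : ι) :
    ρ (equivFinsuppOfBasisRight b (ρ x) i) =
      ((TensorProduct.rid k C).toLinearMap ∘ₗ (b.coord i).lTensor C ∘ₗ Δ).lTensor M (ρ x) := by
  have hcoeff : ∀ t : M ⊗[k] C, ρ (equivFinsuppOfBasisRight b t i) =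
      TensorProduct.rid k (M ⊗[k] C) ((b.coord i).lTensor _ (ρ.rTensor C t)) := by
    intro t
    induction t using TensorProduct.induction_on with
    | zero => simp
    | tmul m c => simp
    | add t t' ht ht' => simp_all
  have hassoc : ∀ u : M ⊗[k] (C ⊗[k] C),
      TensorProduct.rid k (M ⊗[k] C)
          ((b.coord i).lTensor _ ((TensorProduct.assoc k M C C).symm u)) =
        ((TensorProduct.rid k C).toLinearMap ∘ₗ (b.coord i).lTensor C).lTensor M u := by
    intro u
    induction u using TensorProduct.induction_on with
    | zero => simp
    | tmul m w =>
      induction w using TensorProduct.induction_on with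
      | zero => simp
      | tmul c c' => simp [TensorProduct.smul_tmul']
      | add w w' hw hw' => simp_all [TensorProduct.tmul_add]
    | add u u' hu hu' => simp_all
  -- `ρ` of the `i`-th coefficient of `ρ x` is the `i`-th coefficient of `(ρ ⊗ id) (ρ x)`, which by
  -- coassociativity is read off from `(id ⊗ Δ) (ρ x)`.
  have hρx : ρ.rTensor C (ρ x) = (TensorProduct.assoc k M C C).symm (Δ.lTensor M (ρ x)) :=
    (LinearEquiv.eq_symm_apply _).mpr (LinearMap.congr_fun hρ x)
  rw [hcoeff, hρx, hassoc, ← comp_apply, ← lTensor_comp]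
  rfl

theorem exists_fg_isSubcomodule [Module.Free k C]
    (hρ : (TensorProduct.assoc k M C C).toLinearMap ∘ₗ ρ.rTensor C ∘ₗ ρ = Δ.lTensor M ∘ₗ ρ)
    (s : Finset M) : ∃ V : Submodule k M, V.FG ∧ ↑s ⊆ (V : Set M) ∧ IsSubcomodule ρ V := by
  classical
  let b := Module.Free.chooseBasis k C
  let coeff : M → _ →₀ M := fun x => equivFinsuppOfBasisRight b (ρ x)
  let V := Submodule.span k (↑(s ∪ s.biUnion fun x => (coeff x).frange) : Set M)
  have hcoeff : ∀ x ∈ s, ∀ i, coeff x i ∈ V := by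
    intro x hx i
    by_cases h : coeff x i = 0
    · rw [h]
      exact V.zero_mem
    · exact Submodule.subset_span (Finset.mem_union_right _
        (Finset.mem_biUnion.mpr ⟨x, hx, Finsupp.mem_frange.mpr ⟨h, i, rfl⟩⟩))
  have hs : ∀ x ∈ s, ρ x ∈ (V.subtype.rTensor C).range := fun x hx =>
    mem_range_rTensor_subtype_of_forall_coeff_mem b (hcoeff x hx)
  refine ⟨V, ⟨_, rfl⟩, fun x hx => Submodule.subset_span (Finset.mem_union_left _ hx), ?_⟩
  suffices V ≤ (range (V.subtype.rTensor C)).comap ρ from fun v hv => this hv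
  rw [Submodule.span_le]
  intro m hm
  rcases Finset.mem_union.mp hm with hm | hm
  · exact hs m hm
  · obtain ⟨x, hx, hmx⟩ := Finset.mem_biUnion.mp hm
    obtain ⟨-, i, rfl⟩ := Finsupp.mem_frange.mp hmx
    rw [SetLike.mem_coe, Submodule.mem_comap, coaction_coeff_eq_lTensor b hρ]
    exact lTensor_mem_range_rTensor_subtype (hs x hx) _

end Comodule

section SymmetricTensor

open TensorProduct LinearMap

variable {k M : Type*} [Field k] [AddCommGroup M] [Module k M]

theorem mem_range_map_subtype_of_comm_eq_self {V : Submodule k M} {t : M ⊗[k] M}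
    (ht : t ∈ range (V.subtype.rTensor M)) (hcomm : TensorProduct.comm k M M t = t) :
    t ∈ range (TensorProduct.map V.subtype V.subtype) := by
  obtain ⟨p, hp⟩ := V.subtype.exists_leftInverse_of_injective V.ker_subtype
  have hπ : (V.subtype ∘ₗ p) ∘ₗ V.subtype = V.subtype := by
    rw [comp_assoc, hp, comp_id]
  have hr : (V.subtype ∘ₗ p).rTensor M t = t := by
    obtain ⟨u, rfl⟩ := ht
    rw [← comp_apply, ← rTensor_comp, hπ]
  have hl : (V.subtype ∘ₗ p).lTensor M t = t := by
    rw [← hcomm, lTensor_comm, hr]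
  refine ⟨TensorProduct.map p p t, ?_⟩
  rw [← comp_apply, ← map_comp, ← lTensor_comp_rTensor, comp_apply, hr, hl]

end SymmetricTensor

theorem range_map_subtype_le_tensorSq {k A : Type} [Field k] [CommRing A] [Algebra k A]
    {V : Submodule k A} {W : Subalgebra k A} (hVW : V ≤ Subalgebra.toSubmodule W) :
    LinearMap.range (TensorProduct.map V.subtype V.subtype) ≤
      Subalgebra.toSubmodule (tensorSq k A W) := by
  rintro _ ⟨u, rfl⟩
  induction u using TensorProduct.induction_on with
  | zero =>
    rw [map_zero]
    exact zero_mem _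
  | tmul v w =>
    have hvw : (v : A) ⊗ₜ[k] (w : A) = ((v : A) ⊗ₜ[k] (1 : A)) * ((1 : A) ⊗ₜ[k] (w : A)) := by
      simp
    rw [TensorProduct.map_tmul, Submodule.subtype_apply, Submodule.subtype_apply, hvw]
    exact (mul_mem (Algebra.subset_adjoin ⟨v, hVW v.2, Or.inl rfl⟩)
      (Algebra.subset_adjoin ⟨w, hVW w.2, Or.inr rfl⟩) : _ ∈ tensorSq k A W)
  | add u u' hu hu' => simpa using add_mem hu hu'

open Algebra.TensorProduct (includeLeft includeRight)

section PtOp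

variable {k A : Type} [Field k] [CommRing A] [Algebra k A]
variable {R R' : Type} [CommRing R] [Algebra k R] [CommRing R'] [Algebra k R']

theorem comp_ptOp (Δ : A →ₐ[k] A ⊗[k] A) (ψ : R →ₐ[k] R') (f g : A →ₐ[k] R) :
    ψ.comp (ptOp k A Δ f g) = ptOp k A Δ (ψ.comp f) (ψ.comp g) := by
  have : (ψ.comp (Algebra.TensorProduct.lmul' k)).comp (Algebra.TensorProduct.map f g) =
      (Algebra.TensorProduct.lmul' k).comp (Algebra.TensorProduct.map (ψ.comp f) (ψ.comp g)) := by
    ext <;> simp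
  simp only [ptOp, ← AlgHom.comp_assoc, this]

theorem comp_ptConst (ε : A →ₐ[k] k) (ψ : R →ₐ[k] R') :
    ψ.comp (ptConst k A ε) = ptConst k A ε := by
  rw [ptConst, ptConst, ← AlgHom.comp_assoc, Subsingleton.elim (ψ.comp _) (Algebra.ofId k R')]

theorem ptOp_includeLeft_includeRight (Δ : A →ₐ[k] A ⊗[k] A) :
    ptOp k A Δ includeLeft includeRight = Δ := by
  have : (Algebra.TensorProduct.lmul' k).comp
      (Algebra.TensorProduct.map includeLeft includeRight) = AlgHom.id k (A ⊗[k] A) := by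
    ext <;> simp
  rw [ptOp, ← AlgHom.comp_assoc, this, AlgHom.id_comp]

theorem comm_comp_eq_self {Δ : A →ₐ[k] A ⊗[k] A}
    (hΔ : ∀ f g : A →ₐ[k] A ⊗[k] A, ptOp k A Δ f g = ptOp k A Δ g f) :
    (Algebra.TensorProduct.comm k A A : A ⊗[k] A →ₐ[k] A ⊗[k] A).comp Δ = Δ := by
  conv_lhs => rw [← ptOp_includeLeft_includeRight Δ]
  rw [comp_ptOp, Algebra.TensorProduct.comm_comp_includeLeft,
    Algebra.TensorProduct.comm_comp_includeRight, hΔ, ptOp_includeLeft_includeRight]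

end PtOp

noncomputable section

namespace Biring

variable {k A : Type} [Field k] [CommRing A] [Algebra k A] (B : Biring k A)
variable {R R' : Type} [CommRing R] [Algebra k R] [CommRing R'] [Algebra k R']

/-- The `R`-points of the ring scheme `Spec A`. A type synonym, so that the ring structure does not
clash with composition on `A →ₐ[k] A`. -/
def Points (_ : Biring k A) (R : Type) [CommRing R] [Algebra k R] : Type := A →ₐ[k] R

instance : Add (B.Points R) := ⟨ptOp k A B.coadd⟩
instance : Zero (B.Points R) := ⟨ptConst k A B.counitAdd⟩
instance : Neg (B.Points R) := ⟨fun f : A →ₐ[k] R => f.comp B.antipode⟩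
instance : Mul (B.Points R) := ⟨ptOp k A B.comul⟩
instance : One (B.Points R) := ⟨ptConst k A B.counitMul⟩

instance : CommRing (B.Points R) :=
  CommRing.ofMinimalAxioms (B.pt_add_assoc R) (B.pt_zero_add R)
    (fun f => (B.pt_add_comm R _ f).trans (B.pt_add_neg R f)) (B.pt_mul_assoc R)
    (B.pt_mul_comm R) (B.pt_one_mul R) (B.pt_mul_add R)

def pt (f : A →ₐ[k] R) : B.Points R := f

def Points.val (p : B.Points R) : A →ₐ[k] R := p

@[simp] theorem pt_val (p : B.Points R) : B.pt p.val = p := rfl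

theorem pt_injective : Function.Injective (B.pt (R := R)) := fun _ _ h => h

def Points.map (ψ : R →ₐ[k] R') : B.Points R →+* B.Points R' where
  toFun f := B.pt (ψ.comp f)
  map_one' := comp_ptConst B.counitMul ψ
  map_mul' := comp_ptOp B.comul ψ
  map_zero' := comp_ptConst B.counitAdd ψ
  map_add' := comp_ptOp B.coadd ψ

theorem Points.map_pt (ψ : R →ₐ[k] R') (f : A →ₐ[k] R) :
    Points.map B ψ (B.pt f) = B.pt (ψ.comp f) := rfl

/-- The coaction `ρ f (r, (a, b)) = f (a * r + b)` of the affine monoid on `Spec A`. -/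
def affineCoaction : A →ₐ[k] A ⊗[k] (A ⊗[k] A) :=
  (B.pt (includeRight.comp includeLeft) * B.pt includeLeft +
    B.pt (includeRight.comp includeRight)).val

/-- Composition of affine maps: `((a₁, b₁), (a₂, b₂)) ↦ (a₂ * a₁, a₂ * b₁ + b₂)`. -/
def affineComul : A ⊗[k] A →ₐ[k] (A ⊗[k] A) ⊗[k] (A ⊗[k] A) :=
  Algebra.TensorProduct.lift
    (B.pt (includeRight.comp includeLeft) * B.pt (includeLeft.comp includeLeft)).val
    (B.pt (includeRight.comp includeLeft) * B.pt (includeLeft.comp includeRight) +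
      B.pt (includeRight.comp includeRight)).val (fun _ _ => .all _ _)

theorem pt_comp_affineCoaction (ψ : A ⊗[k] (A ⊗[k] A) →ₐ[k] R) :
    B.pt (ψ.comp B.affineCoaction) = B.pt ((ψ.comp includeRight).comp includeLeft) *
      B.pt (ψ.comp includeLeft) + B.pt ((ψ.comp includeRight).comp includeRight) := by
  change Points.map B ψ (_ * _ + _) = _
  rw [map_add, map_mul]
  rfl

theorem pt_map_comp_affineCoaction (φ : A ⊗[k] A →ₐ[k] R) :
    B.pt ((Algebra.TensorProduct.map (AlgHom.id k A) φ).comp B.affineCoaction) =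
      Points.map B includeRight (B.pt (φ.comp includeLeft)) * B.pt includeLeft +
        Points.map B includeRight (B.pt (φ.comp includeRight)) := by
  rw [pt_comp_affineCoaction, Algebra.TensorProduct.map_comp_includeRight,
    Algebra.TensorProduct.map_comp_includeLeft, AlgHom.comp_id]
  rfl

theorem affineCoaction_coassoc :
    (Algebra.TensorProduct.map (AlgHom.id k A) B.affineComul).comp B.affineCoaction =
      (Algebra.TensorProduct.assoc k k k A (A ⊗[k] A) (A ⊗[k] A)).toAlgHom.comp
        ((Algebra.TensorProduct.map B.affineCoaction (AlgHom.id k (A ⊗[k] A))).comp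
          B.affineCoaction) := by
  set X := A ⊗[k] ((A ⊗[k] A) ⊗[k] (A ⊗[k] A))
  set r : B.Points X := B.pt includeLeft
  set a₁ : B.Points X := B.pt (includeRight.comp (includeLeft.comp includeLeft))
  set b₁ : B.Points X := B.pt (includeRight.comp (includeLeft.comp includeRight))
  set a₂ : B.Points X := B.pt (includeRight.comp (includeRight.comp includeLeft))
  set b₂ : B.Points X := B.pt (includeRight.comp (includeRight.comp includeRight))
  have hL : B.pt ((Algebra.TensorProduct.map (AlgHom.id k A) B.affineComul).comp
      B.affineCoaction) = a₂ * a₁ * r + (a₂ * b₁ + b₂) := by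
    rw [pt_map_comp_affineCoaction, affineComul, Algebra.TensorProduct.lift_comp_includeLeft,
      Algebra.TensorProduct.lift_comp_includeRight', pt_val, pt_val, map_mul, map_add, map_mul]
    rfl
  set ψ := (Algebra.TensorProduct.assoc k k k A (A ⊗[k] A) (A ⊗[k] A)).toAlgHom.comp
    (Algebra.TensorProduct.map B.affineCoaction (AlgHom.id k (A ⊗[k] A)))
  have hψr : B.pt (ψ.comp includeLeft) = a₁ * r + b₁ := by
    rw [AlgHom.comp_assoc, Algebra.TensorProduct.map_comp_includeLeft, ← AlgHom.comp_assoc,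
      pt_comp_affineCoaction]
    rfl
  have hψa : B.pt ((ψ.comp includeRight).comp includeLeft) = a₂ :=
    congrArg B.pt (AlgHom.ext fun _ => by simp [ψ, Algebra.TensorProduct.one_def])
  have hψb : B.pt ((ψ.comp includeRight).comp includeRight) = b₂ :=
    congrArg B.pt (AlgHom.ext fun _ => by simp [ψ, Algebra.TensorProduct.one_def])
  apply B.pt_injective (R := X)
  rw [← AlgHom.comp_assoc, hL, pt_comp_affineCoaction, hψr, hψa, hψb]
  ring

theorem exists_map_comp_affineCoaction_eq_coadd :
    ∃ φ : A ⊗[k] A →ₐ[k] A,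
      (Algebra.TensorProduct.map (AlgHom.id k A) φ).comp B.affineCoaction = B.coadd := by
  refine ⟨Algebra.TensorProduct.lift (1 : B.Points A).val (AlgHom.id k A) fun _ _ => .all _ _,
    B.pt_injective ?_⟩
  rw [pt_map_comp_affineCoaction, Algebra.TensorProduct.lift_comp_includeLeft,
    Algebra.TensorProduct.lift_comp_includeRight', pt_val, map_one, one_mul, Points.map_pt,
    AlgHom.comp_id]
  exact ptOp_includeLeft_includeRight B.coadd

theorem exists_map_comp_affineCoaction_eq_comul :
    ∃ φ : A ⊗[k] A →ₐ[k] A,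
      (Algebra.TensorProduct.map (AlgHom.id k A) φ).comp B.affineCoaction = B.comul := by
  refine ⟨Algebra.TensorProduct.lift (AlgHom.id k A) (0 : B.Points A).val fun _ _ => .all _ _,
    B.pt_injective ?_⟩
  rw [pt_map_comp_affineCoaction, Algebra.TensorProduct.lift_comp_includeLeft,
    Algebra.TensorProduct.lift_comp_includeRight', pt_val, map_zero, add_zero, Points.map_pt,
    AlgHom.comp_id, mul_comm]
  exact ptOp_includeLeft_includeRight B.comul

theorem exists_rid_comp_map_comp_affineCoaction_eq_antipode :
    ∃ φ : A ⊗[k] A →ₐ[k] k, (Algebra.TensorProduct.rid k k A).toAlgHom.comp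
      ((Algebra.TensorProduct.map (AlgHom.id k A) φ).comp B.affineCoaction) = B.antipode := by
  refine ⟨Algebra.TensorProduct.lift (-1 : B.Points k).val (0 : B.Points k).val
    fun _ _ => .all _ _, B.pt_injective ?_⟩
  have hrid : (Algebra.TensorProduct.rid k k A).toAlgHom.comp includeLeft = AlgHom.id k A :=
    AlgHom.ext fun _ => by simp
  rw [← Points.map_pt, pt_map_comp_affineCoaction, Algebra.TensorProduct.lift_comp_includeLeft,
    Algebra.TensorProduct.lift_comp_includeRight', pt_val, pt_val, map_zero, add_zero,
    map_mul, map_neg, map_neg, map_one, map_one, neg_one_mul, Points.map_pt, hrid]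
  rfl

variable {B} {V : Submodule k A}

theorem antipode_mem_of_isSubcomodule (hV : IsSubcomodule B.affineCoaction.toLinearMap V)
    {v : A} (hv : v ∈ V) : B.antipode v ∈ V := by
  obtain ⟨φ, hφ⟩ := B.exists_rid_comp_map_comp_affineCoaction_eq_antipode
  rw [← hφ]
  exact rid_mem_of_mem_range_rTensor_subtype
    (lTensor_mem_range_rTensor_subtype (hV v hv) φ.toLinearMap)

theorem mem_range_map_subtype_of_cocommutative {Δ : A →ₐ[k] A ⊗[k] A}
    (hcomm : ∀ f g : A →ₐ[k] A ⊗[k] A, ptOp k A Δ f g = ptOp k A Δ g f)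
    (hΔ : ∃ φ : A ⊗[k] A →ₐ[k] A,
      (Algebra.TensorProduct.map (AlgHom.id k A) φ).comp B.affineCoaction = Δ)
    (hV : IsSubcomodule B.affineCoaction.toLinearMap V) {v : A} (hv : v ∈ V) :
    Δ v ∈ LinearMap.range (TensorProduct.map V.subtype V.subtype) := by
  obtain ⟨φ, rfl⟩ := hΔ
  exact mem_range_map_subtype_of_comm_eq_self
    (lTensor_mem_range_rTensor_subtype (hV v hv) φ.toLinearMap)
    (AlgHom.congr_fun (comm_comp_eq_self hcomm) v)

end Biring

end

/-- **Theorem 2.8**: every finite subset of a `k`-biring `A` is contained in a finitely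
generated `k`-subalgebra `W` that is stable under the antipode and satisfies
`Δ⁺(W) ⊆ W ⊗ W` and `Δ×(W) ⊆ W ⊗ W`; consequently every affine ring scheme over a field is a
filtered inverse limit of ring schemes of finite type. -/
theorem biring_filtered_union_of_finiteType_subbirings
    (k A : Type) [Field k] [CommRing A] [Algebra k A] (B : Biring k A)
    (s : Finset A) :
    ∃ W : Subalgebra k A, W.FG ∧ (↑s : Set A) ⊆ (W : Set A) ∧
      (∀ w ∈ W, B.antipode w ∈ W) ∧
      (∀ w ∈ W, B.coadd w ∈ tensorSq k A W) ∧
      (∀ w ∈ W, B.comul w ∈ tensorSq k A W) := by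
  obtain ⟨V, ⟨t, rfl⟩, hsV, hV⟩ := exists_fg_isSubcomodule
    (LinearMap.ext fun x => (AlgHom.congr_fun B.affineCoaction_coassoc x).symm) s
  set W := Algebra.adjoin k (t : Set A)
  have hVW : Submodule.span k (t : Set A) ≤ Subalgebra.toSubmodule W := Algebra.span_le_adjoin k _
  have hW : ∀ {R : Type} [CommRing R] [Algebra k R] (S : Subalgebra k R) (f : A →ₐ[k] R),
      (∀ v ∈ Submodule.span k (t : Set A), f v ∈ S) → ∀ w ∈ W, f w ∈ S := fun S f hf _ hw =>
    Algebra.adjoin_le (S := S.comap f) (fun v hv => hf v (Submodule.subset_span hv)) hw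
  refine ⟨W, ⟨t, rfl⟩, hsV.trans hVW,
    hW _ _ fun v hv => hVW (Biring.antipode_mem_of_isSubcomodule hV hv),
    hW _ _ fun v hv => range_map_subtype_le_tensorSq hVW
      (Biring.mem_range_map_subtype_of_cocommutative (B.pt_add_comm _)
        B.exists_map_comp_affineCoaction_eq_coadd hV hv),
    hW _ _ fun v hv => range_map_subtype_le_tensorSq hVW
      (Biring.mem_range_map_subtype_of_cocommutative (B.pt_mul_comm _)
        B.exists_map_comp_affineCoaction_eq_comul hV hv)⟩
end

section
/- Let k be a field of characteristic p > 0. Let M be a k-vector space equipped with an additive map F : M → M satisfying F(c·x) = c^p·F(x) for all c ∈ k, x ∈ M, and with k-linear maps δ : M → M ⊗[k] M and ε : M → k making (M, δ, ε) a coassociative, cocommutative, counital coalgebra such that δ(F x) = (F ⊗ F)(δ(x)) for all x ∈ M. Let Sym(M) be the symmetric algebra of M with canonical inclusion ι : M → Sym(M), let Δ⁺ : Sym(M) → Sym(M) ⊗[k] Sym(M) be the algebra homomorphism extending x ↦ ι(x) ⊗ 1 + 1 ⊗ ι(x), and let Δ× be the algebra homomorphism extending (ι ⊗ ι) ∘ δ.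 Let J be the ideal of Sym(M) generated by the set {ι(x)^p − ι(F x) : x ∈ M}. Then Δ⁺(J) ⊆ J ⊗ Sym(M) + Sym(M) ⊗ J and Δ×(J) ⊆ J ⊗ Sym(M) + Sym(M) ⊗ J, where J ⊗ Sym(M) + Sym(M) ⊗ J denotes the k-submodule of Sym(M) ⊗[k] Sym(M) spanned by elements j ⊗ a and a ⊗ j with j ∈ J, a ∈ Sym(M). (This is the content of Lemma 5.4 of the paper: the ideal defining Sym^[p](M) inside Sym(M) is a bi-ideal, so Sym^[p](Prim(Q)) inherits a plethory structure.) -/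
open scoped TensorProduct

/-- The `k`-submodule `J ⊗ S + S ⊗ J` of `S ⊗[k] S` spanned by the elements `j ⊗ a` and
`a ⊗ j` with `j ∈ J`, `a ∈ S`. -/
def sideIdeal (k S : Type) [Field k] [CommRing S] [Algebra k S] (J : Ideal S) :
    Submodule k (S ⊗[k] S) :=
  Submodule.span k {x : S ⊗[k] S | ∃ j ∈ J, ∃ a : S, x = j ⊗ₜ[k] a ∨ x = a ⊗ₜ[k] j}

/-- **Lemma 5.4**: let `k` be a field of characteristic `p > 0` and `M` a cocommutative
counital `k`-coalgebra `(M, δ, ε)` equipped with a Frobenius-semilinear additive map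
`F : M → M` (`F (c • x) = c^p • F x`) commuting with the comultiplication
(`δ (F x) = (F ⊗ F) (δ x)`).  Let `Sym(M)` be the symmetric algebra on `M` (here: any
commutative `k`-algebra `S` with `ι : M → S` having its universal property), let
`Δ⁺ : Sym(M) → Sym(M) ⊗ Sym(M)` be the algebra map extending `x ↦ ι x ⊗ 1 + 1 ⊗ ι x` and
`Δ×` the algebra map extending `(ι ⊗ ι) ∘ δ`, and let `J` be the ideal generated by
`{ι(x)^p − ι(F x)}`.  Then `Δ⁺(J) ⊆ J ⊗ Sym(M) + Sym(M) ⊗ J` and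
`Δ×(J) ⊆ J ⊗ Sym(M) + Sym(M) ⊗ J`; i.e. `J` is a bi-ideal, so `Sym^[p](M)` inherits the
structure. -/
theorem symp_ideal_is_biideal
    (k : Type) [Field k] (p : ℕ) [CharP k p] (hp : p ≠ 0)
    (M : Type) [AddCommGroup M] [Module k M]
    -- the Frobenius-semilinear endomorphism `F`
    (F : M →+ M) (hF : ∀ (c : k) (x : M), F (c • x) = c ^ p • F x)
    -- the coalgebra structure
    (δ : M →ₗ[k] M ⊗[k] M) (ε : M →ₗ[k] k)
    (hcoassoc : ∀ x : M,
      (TensorProduct.assoc k M M M) ((TensorProduct.map δ LinearMap.id) (δ x))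
        = (TensorProduct.map LinearMap.id δ) (δ x))
    (hcocomm : ∀ x : M, (TensorProduct.comm k M M) (δ x) = δ x)
    (hcounitl : ∀ x : M,
      (TensorProduct.lid k M) ((TensorProduct.map ε LinearMap.id) (δ x)) = x)
    (hcounitr : ∀ x : M,
      (TensorProduct.rid k M) ((TensorProduct.map LinearMap.id ε) (δ x)) = x)
    -- `F ⊗ F` (well defined since `F` is Frobenius-semilinear) and compatibility with `δ`
    (FF : M ⊗[k] M →+ M ⊗[k] M) (hFF : ∀ a b : M, FF (a ⊗ₜ[k] b) = F a ⊗ₜ[k] F b)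
    (hδF : ∀ x : M, δ (F x) = FF (δ x))
    -- the symmetric algebra `S = Sym(M)` with its universal property
    (S : Type) [CommRing S] [Algebra k S] (ι : M →ₗ[k] S)
    (huniv : ∀ (C : Type) [CommRing C] [Algebra k C] (φ : M →ₗ[k] C),
      ∃! g : S →ₐ[k] C, g.toLinearMap ∘ₗ ι = φ)
    -- the coaddition and comultiplication of `Sym(M)`
    (Δp : S →ₐ[k] S ⊗[k] S)
    (hΔp : ∀ x : M, Δp (ι x) = ι x ⊗ₜ[k] (1 : S) + (1 : S) ⊗ₜ[k] ι x)
    (Δm : S →ₐ[k] S ⊗[k] S)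
    (hΔm : ∀ x : M, Δm (ι x) = (TensorProduct.map ι ι) (δ x))
    -- the ideal `J` defining `Sym^[p](M)`
    (J : Ideal S) (hJ : J = Ideal.span {y : S | ∃ x : M, y = ι x ^ p - ι (F x)}) :
    (∀ j ∈ J, Δp j ∈ sideIdeal k S J) ∧ (∀ j ∈ J, Δm j ∈ sideIdeal k S J) := by

  obtain hS | hS := subsingleton_or_nontrivial (S ⊗[k] S)
  · exact ⟨fun j _ => by rw [Subsingleton.elim (Δp j) 0]; exact Submodule.zero_mem _,
           fun j _ => by rw [Subsingleton.elim (Δm j) 0]; exact Submodule.zero_mem _⟩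
  have hpr : p.Prime := (CharP.char_is_prime_or_zero k p).resolve_right hp
  haveI : Fact p.Prime := ⟨hpr⟩
  haveI : CharP (S ⊗[k] S) p :=
    charP_of_injective_algebraMap (algebraMap k (S ⊗[k] S)).injective p
  -- membership of simple tensors
  have memL : ∀ j' ∈ J, ∀ a : S, j' ⊗ₜ[k] a ∈ sideIdeal k S J := fun j' hj' a =>
    Submodule.subset_span ⟨j', hj', a, Or.inl rfl⟩
  have memR : ∀ j' ∈ J, ∀ a : S, a ⊗ₜ[k] j' ∈ sideIdeal k S J := fun j' hj' a =>
    Submodule.subset_span ⟨j', hj', a, Or.inr rfl⟩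
  -- closure under multiplication
  have mulmem : ∀ w z : S ⊗[k] S, z ∈ sideIdeal k S J → w * z ∈ sideIdeal k S J := by
    intro w z hz
    induction hz using Submodule.span_induction with
    | mem y hy =>
      obtain ⟨j', hj', a, hy | hy⟩ := hy <;> subst hy <;>
      · induction w using TensorProduct.induction_on with
        | zero => rw [zero_mul]; exact Submodule.zero_mem _
        | tmul c d =>
          rw [Algebra.TensorProduct.tmul_mul_tmul]
          first
          | exact memL _ (J.mul_mem_left c hj') _
          | exact memR _ (J.mul_mem_left d hj') _
        | add w1 w2 h1 h2 => rw [add_mul]; exact Submodule.add_mem _ h1 h2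
    | zero => rw [mul_zero]; exact Submodule.zero_mem _
    | add y z' _ _ h1 h2 => rw [mul_add]; exact Submodule.add_mem _ h1 h2
    | smul c y _ h => rw [mul_smul_comm]; exact Submodule.smul_mem _ c h
  -- generator membership for Δp
  have genp : ∀ x : M, Δp (ι x ^ p - ι (F x)) ∈ sideIdeal k S J := by
    intro x
    have hx : ι x ^ p - ι (F x) ∈ J := hJ ▸ Ideal.subset_span ⟨x, rfl⟩
    rw [map_sub, map_pow, hΔp, hΔp, add_pow_char, Algebra.TensorProduct.tmul_pow,
      Algebra.TensorProduct.tmul_pow, one_pow]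
    have h : (ι x ^ p) ⊗ₜ[k] (1 : S) + (1 : S) ⊗ₜ[k] (ι x ^ p)
        - (ι (F x) ⊗ₜ[k] (1 : S) + (1 : S) ⊗ₜ[k] ι (F x))
        = (ι x ^ p - ι (F x)) ⊗ₜ[k] (1 : S) + (1 : S) ⊗ₜ[k] (ι x ^ p - ι (F x)) := by
      rw [TensorProduct.sub_tmul, TensorProduct.tmul_sub]; ring
    rw [h]
    exact Submodule.add_mem _ (memL _ hx 1) (memR _ hx 1)
  -- generator membership for Δm
  have key : ∀ t : M ⊗[k] M,
      (TensorProduct.map ι ι t) ^ p - TensorProduct.map ι ι (FF t)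
        ∈ sideIdeal k S J := by
    intro t
    induction t using TensorProduct.induction_on with
    | zero => simp [zero_pow hp, Submodule.zero_mem]
    | tmul a b =>
      have ha : ι a ^ p - ι (F a) ∈ J := hJ ▸ Ideal.subset_span ⟨a, rfl⟩
      have hb : ι b ^ p - ι (F b) ∈ J := hJ ▸ Ideal.subset_span ⟨b, rfl⟩
      rw [hFF, TensorProduct.map_tmul, TensorProduct.map_tmul,
        Algebra.TensorProduct.tmul_pow]
      have h : (ι a ^ p) ⊗ₜ[k] (ι b ^ p) - ι (F a) ⊗ₜ[k] ι (F b)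
          = (ι a ^ p - ι (F a)) ⊗ₜ[k] (ι b ^ p)
            + ι (F a) ⊗ₜ[k] (ι b ^ p - ι (F b)) := by
        rw [TensorProduct.sub_tmul, TensorProduct.tmul_sub]; ring
      rw [h]
      exact Submodule.add_mem _ (memL _ ha _) (memR _ hb _)
    | add t u ht hu =>
      rw [map_add, map_add, map_add, add_pow_char, add_sub_add_comm]
      exact Submodule.add_mem _ ht hu
  have genm : ∀ x : M, Δm (ι x ^ p - ι (F x)) ∈ sideIdeal k S J := by
    intro x
    rw [map_sub, map_pow, hΔm, hΔm, hδF]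
    exact key (δ x)
  -- span induction over J
  have main : ∀ (Δ : S →ₐ[k] S ⊗[k] S),
      (∀ x : M, Δ (ι x ^ p - ι (F x)) ∈ sideIdeal k S J) →
      ∀ j ∈ J, Δ j ∈ sideIdeal k S J := by
    intro Δ hgen j hj
    rw [hJ] at hj
    induction hj using Submodule.span_induction with
    | mem y hy => obtain ⟨x, rfl⟩ := hy; exact hgen x
    | zero => rw [map_zero]; exact Submodule.zero_mem _
    | add a b _ _ ha hb => rw [map_add]; exact Submodule.add_mem _ ha hb
    | smul r y _ h => rw [smul_eq_mul, map_mul]; exact mulmem _ _ h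
  exact ⟨main Δp genp, main Δm genm⟩
end

section
/- Let k be a perfect field of characteristic p > 0 and A a k-biring that is finite-dimensional as a k-vector space and whose only idempotent elements are 0 and 1. Then the structure map k → A is bijective, i.e., A = k. (This is the claim of Remark 5.7 of the paper: there are no non-trivial finite connected ring schemes over a perfect field, because the Frobenius would be both nilpotent and a map of ring schemes fixing the identity.) -/
/- A `k`-biring: a commutative `k`-algebra `A` with coaddition, additive counit, antipode,
comultiplication and multiplicative counit, such that for every commutative `k`-algebra `R`
the induced operations make `Hom_{k-alg}(A, R)` a commutative unital ring (equivalently, the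
diagrammatic coring/codistributivity axioms hold). -/

open scoped TensorProduct

/-
Over a connected finite-dimensional algebra all `k`-points `A → k` coincide, since `A` is local
with residue field `k`; hence the additive and multiplicative counits agree, i.e. `0 = 1` in the
ring of points `Hom_{k-alg}(A, R)` for every `R`. A ring with `0 = 1` is zero, so the identity of
`A`, viewed as an `A`-point, equals the zero point `A → k → A`, which forces `A = k`.
-/

theorem IsArtinianRing.isUnit_or_isNilpotent_of_connected {A : Type*} [CommRing A] [IsArtinianRing A]
    (hconn : ∀ e : A, e * e = e → e = 0 ∨ e = 1) (x : A) : IsUnit x ∨ IsNilpotent x := by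
  obtain ⟨n, y, hy⟩ := IsArtinian.exists_pow_succ_smul_dvd x (1 : A)
  simp only [smul_eq_mul, mul_one, Nat.succ_eq_add_one] at hy
  have hfit : ∀ m, x ^ n = x ^ (n + m) * y ^ m := by
    intro m
    induction m with
    | zero => simp
    | succ m ih => linear_combination ih - x ^ m * y ^ m * hy
  -- the Fitting idempotent of multiplication by `x`
  have hidem : x ^ n * y ^ n * (x ^ n * y ^ n) = x ^ n * y ^ n := by
    calc x ^ n * y ^ n * (x ^ n * y ^ n) = x ^ (n + n) * y ^ n * y ^ n := by ring
      _ = x ^ n * y ^ n := by rw [← hfit]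
  rcases hconn _ hidem with h0 | h1
  · refine .inr ⟨n, ?_⟩
    rw [hfit n, pow_add, mul_assoc, h0, mul_zero]
  · refine .inl (IsUnit.of_mul_eq_one (x ^ n * y ^ (n + 1)) ?_)
    calc x * (x ^ n * y ^ (n + 1)) = x ^ (n + 1) * y * y ^ n := by ring
      _ = 1 := by rw [hy, h1]

theorem AlgHom.eq_of_isArtinianRing_of_connected {k A : Type*} [Field k] [CommRing A]
    [Algebra k A] [IsArtinianRing A] (hconn : ∀ e : A, e * e = e → e = 0 ∨ e = 1)
    (φ ψ : A →ₐ[k] k) : φ = ψ := by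
  ext a
  set x := a - algebraMap k A (φ a)
  have hφx : φ x = 0 := by simp [x]
  have hx : IsNilpotent x :=
    (IsArtinianRing.isUnit_or_isNilpotent_of_connected hconn x).resolve_left
      fun hu ↦ not_isUnit_zero (hφx ▸ hu.map φ)
  have hψx : ψ x = 0 := (hx.map ψ).eq_zero
  exact (sub_eq_zero.mp (by simpa [x] using hψx)).symm

namespace Biring

variable {k A : Type} [Field k] [CommRing A] [Algebra k A] (B : Biring k A)
  {R : Type} [CommRing R] [Algebra k R]

theorem pt_eq_zero_of_add_self {w : A →ₐ[k] R} (hw : ptOp k A B.coadd w w = w) :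
    w = ptConst k A B.counitAdd :=
  calc w = ptOp k A B.coadd (ptConst k A B.counitAdd) w := (B.pt_zero_add R w).symm
    _ = ptOp k A B.coadd w (ptConst k A B.counitAdd) := B.pt_add_comm R _ w
    _ = ptOp k A B.coadd w (ptOp k A B.coadd w (w.comp B.antipode)) := by rw [B.pt_add_neg]
    _ = ptOp k A B.coadd (ptOp k A B.coadd w w) (w.comp B.antipode) :=
      (B.pt_add_assoc R w w _).symm
    _ = ptConst k A B.counitAdd := by rw [hw, B.pt_add_neg]

theorem pt_mul_zero (f : A →ₐ[k] R) :
    ptOp k A B.comul f (ptConst k A B.counitAdd) = ptConst k A B.counitAdd := by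
  apply pt_eq_zero_of_add_self
  rw [← B.pt_mul_add, B.pt_zero_add]

theorem pt_eq_zero_of_counitMul_eq_counitAdd (h : B.counitMul = B.counitAdd) (f : A →ₐ[k] R) :
    f = ptConst k A B.counitAdd :=
  calc f = ptOp k A B.comul (ptConst k A B.counitMul) f := (B.pt_one_mul R f).symm
    _ = ptOp k A B.comul f (ptConst k A B.counitAdd) := by rw [h, B.pt_mul_comm]
    _ = ptConst k A B.counitAdd := B.pt_mul_zero f

end Biring

theorem finite_connected_biring_trivial_general
    (k A : Type) [Field k]
    [CommRing A] [Algebra k A] (B : Biring k A)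
    [FiniteDimensional k A]
    (hconn : ∀ e : A, e * e = e → e = 0 ∨ e = 1) :
    Function.Bijective (algebraMap k A) := by
  have : IsArtinianRing A := .of_finite k A
  have hcounit : B.counitMul = B.counitAdd := AlgHom.eq_of_isArtinianRing_of_connected hconn _ _
  have hid : AlgHom.id k A = ptConst k A B.counitAdd :=
    B.pt_eq_zero_of_counitMul_eq_counitAdd hcounit _
  refine Function.bijective_iff_has_inverse.mpr ⟨B.counitAdd, fun c ↦ by simp, fun a ↦ ?_⟩
  simpa [ptConst] using (AlgHom.congr_fun hid a).symm

/-- **Remark 5.7**: there are no non-trivial finite connected ring schemes over a perfect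
field of characteristic `p > 0`: if `A` is a `k`-biring which is finite-dimensional as a
`k`-vector space and whose only idempotents are `0` and `1`, then `A = k`. -/
theorem finite_connected_biring_trivial
    (k A : Type) [Field k] (p : ℕ) [Fact p.Prime] [CharP k p] [PerfectField k]
    [CommRing A] [Algebra k A] (B : Biring k A)
    [FiniteDimensional k A]
    (hconn : ∀ e : A, e * e = e → e = 0 ∨ e = 1) :
    Function.Bijective (algebraMap k A) :=
  finite_connected_biring_trivial_general k A B hconn
end

section
/- Let k be an infinite field and A a k-k-biring whose underlying k-algebra is finite-dimensional and étale over k (equivalently, isomorphic as a k-algebra to a finite product of finite separable field extensions of k). Then the structure map k → A is bijective, i.e., A = k. (This is the key step in the proof of Lemma 4.3 of the paper: the étale quotient π₀ of a k-algebra scheme of finite type over an infinite field is trivial, because its finite endomorphism set would otherwise carry a k-algebra structure.) -/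
/- A `k`-biring: a commutative `k`-algebra `A` with coaddition, additive counit, antipode,
comultiplication and multiplicative counit, such that for every commutative `k`-algebra `R`
the induced operations make `Hom_{k-alg}(A, R)` a commutative unital ring (equivalently, the
diagrammatic coring/codistributivity axioms hold). -/

open scoped TensorProduct

/-- A `k`-`k`-biring: a `k`-biring `A` together with a map `β` from `k` to the set of
`k`-algebra homomorphisms `A → k` such that `β 0 = ε⁺`, `β 1 = ε×`,
`β (c + c') = (β c ⊗ β c') ∘ Δ⁺` and `β (c * c') = (β c ⊗ β c') ∘ Δ×`; equivalently, an
affine `k`-algebra scheme over `k`. -/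
structure Bibiring (k A : Type) [Field k] [CommRing A] [Algebra k A]
    extends Biring k A where
  beta : k → (A →ₐ[k] k)
  beta_zero : beta 0 = counitAdd
  beta_one : beta 1 = counitMul
  beta_add : ∀ c c' : k, beta (c + c') = ptOp k A coadd (beta c) (beta c')
  beta_mul : ∀ c c' : k, beta (c * c') = ptOp k A comul (beta c) (beta c')

section Aux

variable {k A : Type} [Field k] [CommRing A] [Algebra k A] (B : Biring k A)

/-- Cancellation in the induced additive structure. -/
lemma Biring.add_left_cancel' {R : Type} [CommRing R] [Algebra k R]
    (f g h : A →ₐ[k] R)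
    (H : ptOp k A B.coadd f g = ptOp k A B.coadd f h) : g = h := by
  have key : ∀ x : A →ₐ[k] R,
      ptOp k A B.coadd (f.comp B.antipode) (ptOp k A B.coadd f x) = x := by
    intro x
    rw [← B.pt_add_assoc, B.pt_add_comm R (f.comp B.antipode) f, B.pt_add_neg,
      B.pt_zero_add]
  rw [← key g, H, key]

/-- `0 * f = 0` in the induced ring structure. -/
lemma Biring.zero_mul' {R : Type} [CommRing R] [Algebra k R] (f : A →ₐ[k] R) :
    ptOp k A B.comul (ptConst k A B.counitAdd) f = ptConst k A B.counitAdd := by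
  rw [B.pt_mul_comm]
  apply B.add_left_cancel' (ptOp k A B.comul f (ptConst k A B.counitAdd))
  rw [← B.pt_mul_add]
  rw [B.pt_zero_add]
  rw [B.pt_add_comm, B.pt_zero_add]

/-- Over `R = k`, `ptConst` of a counit is that counit. -/
lemma ptConst_self (ε : A →ₐ[k] k) : ptConst k A ε (R := k) = ε := by
  ext a
  simp [ptConst, Algebra.ofId_apply]

end Aux

/-- Key step in the proof of Lemma 4.3: a `k`-`k`-biring over an infinite field `k` whose
underlying `k`-algebra is finite-dimensional and étale (i.e. finite-dimensional and formally
étale, equivalently a finite product of finite separable field extensions of `k`) is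
trivial: `A = k`. -/
theorem etale_bibiring_over_infinite_field_trivial
    (k A : Type) [Field k] [Infinite k] [CommRing A] [Algebra k A]
    (B : Bibiring k A)
    [FiniteDimensional k A] [Algebra.FormallyEtale k A] :
    Function.Bijective (algebraMap k A) := by
  -- `Hom(A, k)` is finite, so `β` is not injective.
  have hfin : Finite (A →ₐ[k] k) := Finite.algHom k A k
  obtain ⟨c, c', hne, heq⟩ := Finite.exists_ne_map_eq_of_infinite B.beta
  set d : k := c - c' with hd
  have hd0 : d ≠ 0 := sub_ne_zero.mpr hne
  -- deduce `β d = β 0`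
  have h1 : ptOp k A B.coadd (B.beta c') (B.beta d) = B.beta c := by
    rw [← B.beta_add]; congr 1; ring
  have h2 : B.beta c' = ptOp k A B.coadd (B.beta c') (B.beta 0) := by
    rw [← B.beta_add, add_zero]
  have hbd : B.beta d = B.beta 0 :=
    B.toBiring.add_left_cancel' (B.beta c') _ _ ((h1.trans heq).trans h2)
  -- deduce `ε× = ε⁺`
  have hce : B.counitMul = B.counitAdd := by
    have : B.counitMul = ptOp k A B.comul (B.beta d) (B.beta d⁻¹) := by
      rw [← B.beta_mul, mul_inv_cancel₀ hd0, B.beta_one]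
    rw [this, hbd, B.beta_zero, ← ptConst_self B.counitAdd,
      B.toBiring.zero_mul', ptConst_self]
  -- hence `1 = 0` in `Hom(A, A)`, so `id = 0`, i.e. `id` factors through `k`
  have hid : AlgHom.id k A = ptConst k A B.counitAdd := by
    have h3 := B.pt_one_mul A (AlgHom.id k A)
    rw [hce, B.toBiring.zero_mul'] at h3
    exact h3.symm
  constructor
  · intro x y hxy
    have := congrArg B.counitAdd hxy
    simpa using this
  · intro a
    refine ⟨B.counitAdd a, ?_⟩
    have := congrArg (fun f : A →ₐ[k] A => f a) hid
    simpa [ptConst, Algebra.ofId_apply] using this.symm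
end
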